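/- arXiv:2604.25585 — 4 statements merged into one kernel-verified Lean document; each statement's English description precedes it below -/
import Mathlib

section
/- Let U be a finite universe and F a nonempty family of subsets of U. If each element u of U is independently assigned a weight ω(u) chosen uniformly at random from {1,...,N}, then with probability at least 1 − |U|/N there is a unique set S in F minimizing the total weight ω(S) = Σ_{u∈S} ω(u). -/
open Finset

set_option linter.unusedSectionVars false

section IsolationAux
variable {U : Type*} [Fintype U] [DecidableEq U] {N : ℕ}

private def wt (ω : U → Fin N) (S : Finset U) : ℕ := ∑ u ∈ S, ((ω u : ℕ) + 1)

private lemma wt_congr {ω ω' : U → Fin N} {S : Finset U} (h : ∀ v ∈ S, ω v = ω' v) :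
    wt ω S = wt ω' S := Finset.sum_congr rfl fun v hv => by rw [h v hv]

private lemma wt_split (ω : U → Fin N) {S : Finset U} {u : U} (hu : u ∈ S) :
    wt ω S = wt ω (S.erase u) + ((ω u : ℕ) + 1) := by
  rw [wt, wt, Finset.sum_erase_add _ _ hu]

private lemma key (F : Finset (Finset U)) {u : U} {ω ω' : U → Fin N}
    (hagree : ∀ v, v ≠ u → ω v = ω' v)
    {S T S' T' : Finset U} (hS : S ∈ F) (hT : T ∈ F) (hS' : S' ∈ F) (hT' : T' ∈ F)
    (hSmin : ∀ X ∈ F, wt ω S ≤ wt ω X) (hTmin : ∀ X ∈ F, wt ω T ≤ wt ω X)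
    (hS'min : ∀ X ∈ F, wt ω' S' ≤ wt ω' X) (hT'min : ∀ X ∈ F, wt ω' T' ≤ wt ω' X)
    (huS : u ∈ S) (huT : u ∉ T) (huS' : u ∈ S') (huT' : u ∉ T') :
    ω u = ω' u := by
  have hagree' : ∀ v, v ≠ u → ω' v = ω v := fun v hv => (hagree v hv).symm
  have e2 : wt ω T' = wt ω' T' := wt_congr fun v hv => hagree v (fun h => huT' (h ▸ hv))
  have e2' : wt ω' T = wt ω T := wt_congr fun v hv => hagree' v (fun h => huT (h ▸ hv))
  have hA : wt ω S ≤ wt ω' S' := by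
    calc wt ω S ≤ wt ω T' := hSmin T' hT'
    _ = wt ω' T' := e2
    _ ≤ wt ω' S' := hT'min S' hS'
  have hB : wt ω' S' ≤ wt ω S := by
    calc wt ω' S' ≤ wt ω' T := hS'min T hT
    _ = wt ω T := e2'
    _ ≤ wt ω S := hTmin S hS
  have heq : wt ω S = wt ω' S' := le_antisymm hA hB
  have h1 : wt ω' S' ≤ wt ω S' := by rw [← heq]; exact hSmin S' hS'
  have tails' : wt ω' (S'.erase u) = wt ω (S'.erase u) :=
    wt_congr fun v hv => hagree' v (Finset.ne_of_mem_erase hv)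
  rw [wt_split ω' huS', wt_split ω huS', tails'] at h1
  have hle1 : (ω' u : ℕ) ≤ ω u := by omega
  have h2 : wt ω S ≤ wt ω' S := by rw [heq]; exact hS'min S hS
  have tails : wt ω (S.erase u) = wt ω' (S.erase u) :=
    wt_congr fun v hv => hagree v (Finset.ne_of_mem_erase hv)
  rw [wt_split ω huS, wt_split ω' huS, tails] at h2
  have hle2 : (ω u : ℕ) ≤ ω' u := by omega
  exact Fin.ext (le_antisymm hle2 hle1)

end IsolationAux

/-- Isolation Lemma: for a nonempty family `F` of subsets of a finite universe `U`,
if each element gets an i.i.d. uniform weight in `{1,…,N}` (encoded as `Fin N`, with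
weight `ω u + 1`), then with probability at least `1 - |U|/N` there is a unique
minimum-weight set in `F`. Probability is counted over all weight functions. -/
theorem stmt_0 {U : Type*} [Fintype U] [DecidableEq U]
    (F : Finset (Finset U)) (hF : F.Nonempty) (N : ℕ) (hN : 0 < N) :
    (1 : ℚ) - (Fintype.card U : ℚ) / (N : ℚ) ≤
      ((Finset.univ.filter (fun ω : U → Fin N =>
          (F.filter (fun S => ∀ S' ∈ F,
            (∑ u ∈ S, ((ω u : ℕ) + 1)) ≤ ∑ u ∈ S', ((ω u : ℕ) + 1))).card = 1)).card : ℚ)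
        / (Fintype.card (U → Fin N) : ℚ) := by
  set good := Finset.univ.filter (fun ω : U → Fin N =>
      (F.filter (fun S => ∀ S' ∈ F,
        (∑ u ∈ S, ((ω u : ℕ) + 1)) ≤ ∑ u ∈ S', ((ω u : ℕ) + 1))).card = 1) with hgood
  classical
  set M := Fintype.card (U → Fin N) with hM
  set d := Fintype.card U with hd
  haveI : Nonempty (Fin N) := ⟨⟨0, hN⟩⟩
  have hM0 : 0 < M := Fintype.card_pos
  set bad : Finset (U → Fin N) := Finset.univ \ good with hbad
  have hGB : bad.card + good.card = M := by
    rw [hbad, Finset.card_sdiff_add_card_eq_card (Finset.subset_univ good),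
      Finset.card_univ]
  -- the "ambivalent at u" events
  set A : U → Finset (U → Fin N) := fun u => Finset.univ.filter (fun ω =>
      ∃ S ∈ F, ∃ T ∈ F, (∀ X ∈ F, wt ω S ≤ wt ω X) ∧ (∀ X ∈ F, wt ω T ≤ wt ω X) ∧
        u ∈ S ∧ u ∉ T) with hA
  -- each A u has at most M / N elements
  have hAcard : ∀ u : U, (A u).card * N ≤ M := by
    intro u
    have hinj : Set.InjOn (fun p : (U → Fin N) × Fin N => Function.update p.1 u p.2)
        (((A u) ×ˢ (Finset.univ : Finset (Fin N)) : Finset _) : Set _) := by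
      rintro ⟨ω, k⟩ hp ⟨ω', k'⟩ hq h
      simp only [Finset.mem_coe, Finset.mem_product, hA,
        Finset.mem_filter, Finset.mem_univ, true_and, and_true] at hp hq
      obtain ⟨S, hS, T, hT, hSmin, hTmin, huS, huT⟩ := hp
      obtain ⟨S', hS', T', hT', hS'min, hT'min, huS', huT'⟩ := hq
      have hk : k = k' := by
        have := congrFun h u
        simpa using this
      have hagree : ∀ v, v ≠ u → ω v = ω' v := by
        intro v hv
        have := congrFun h v
        simpa [Function.update_of_ne hv] using this
      have hu : ω u = ω' u :=
        key F hagree hS hT hS' hT' hSmin hTmin hS'min hT'min huS huT huS' huT'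
      have : ω = ω' := funext fun v => by
        by_cases hv : v = u
        · subst hv; exact hu
        · exact hagree v hv
      exact Prod.ext this hk
    have hle : ((A u) ×ˢ (Finset.univ : Finset (Fin N))).card ≤
        (Finset.univ : Finset (U → Fin N)).card :=
      Finset.card_le_card_of_injOn _ (fun _ _ => Finset.mem_univ _) hinj
    rw [Finset.card_product, Finset.card_univ, Fintype.card_fin] at hle
    rw [Finset.card_univ, ← hM] at hle
    exact hle
  -- bad events are covered by the A u
  have hcover : bad ⊆ Finset.univ.biUnion A := by
    intro ω hω
    have hωbad : ¬ (F.filter (fun S => ∀ S' ∈ F,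
        (∑ u ∈ S, ((ω u : ℕ) + 1)) ≤ ∑ u ∈ S', ((ω u : ℕ) + 1))).card = 1 := by
      rw [hbad, Finset.mem_sdiff] at hω
      have := hω.2
      rw [hgood, Finset.mem_filter] at this
      tauto
    -- the filter of minimizers is nonempty
    obtain ⟨S₀, hS₀F, hS₀min⟩ := Finset.exists_min_image F (wt ω) hF
    have hmem : S₀ ∈ F.filter (fun S => ∀ S' ∈ F,
        (∑ u ∈ S, ((ω u : ℕ) + 1)) ≤ ∑ u ∈ S', ((ω u : ℕ) + 1)) := by
      rw [Finset.mem_filter]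
      exact ⟨hS₀F, fun S' hS' => hS₀min S' hS'⟩
    have hpos : 0 < (F.filter (fun S => ∀ S' ∈ F,
        (∑ u ∈ S, ((ω u : ℕ) + 1)) ≤ ∑ u ∈ S', ((ω u : ℕ) + 1))).card :=
      Finset.card_pos.mpr ⟨S₀, hmem⟩
    have h2 : 1 < (F.filter (fun S => ∀ S' ∈ F,
        (∑ u ∈ S, ((ω u : ℕ) + 1)) ≤ ∑ u ∈ S', ((ω u : ℕ) + 1))).card := by omega
    obtain ⟨S, hS, T, hT, hST⟩ := Finset.one_lt_card.mp h2
    rw [Finset.mem_filter] at hS hT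
    have hSmin : ∀ X ∈ F, wt ω S ≤ wt ω X := fun X hX => hS.2 X hX
    have hTmin : ∀ X ∈ F, wt ω T ≤ wt ω X := fun X hX => hT.2 X hX
    have hsub : ¬ (S ⊆ T) ∨ ¬ (T ⊆ S) := by
      by_contra hc
      push_neg at hc
      exact hST (Finset.Subset.antisymm hc.1 hc.2)
    rcases hsub with hns | hns
    · obtain ⟨u, huS, huT⟩ := Finset.not_subset.mp hns
      refine Finset.mem_biUnion.mpr ⟨u, Finset.mem_univ u, ?_⟩
      rw [hA, Finset.mem_filter]
      exact ⟨Finset.mem_univ ω, S, hS.1, T, hT.1, hSmin, hTmin, huS, huT⟩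
    · obtain ⟨u, huT, huS⟩ := Finset.not_subset.mp hns
      refine Finset.mem_biUnion.mpr ⟨u, Finset.mem_univ u, ?_⟩
      rw [hA, Finset.mem_filter]
      exact ⟨Finset.mem_univ ω, T, hT.1, S, hS.1, hTmin, hSmin, huT, huS⟩
  -- counting
  have hbadN : bad.card * N ≤ d * M := by
    calc bad.card * N ≤ (Finset.univ.biUnion A).card * N :=
          Nat.mul_le_mul_right N (Finset.card_le_card hcover)
    _ ≤ (∑ u : U, (A u).card) * N :=
          Nat.mul_le_mul_right N Finset.card_biUnion_le
    _ = ∑ u : U, ((A u).card * N) := Finset.sum_mul _ _ _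
    _ ≤ ∑ _u : U, M := Finset.sum_le_sum (fun u _ => hAcard u)
    _ = d * M := by rw [Finset.sum_const, Finset.card_univ, smul_eq_mul]
  -- rational arithmetic
  have hN0 : (0 : ℚ) < N := by exact_mod_cast hN
  have hM0' : (0 : ℚ) < M := by exact_mod_cast hM0
  have key2 : (bad.card : ℚ) * N ≤ d * M := by exact_mod_cast hbadN
  have main : (bad.card : ℚ) / M ≤ d / N := by
    rw [div_le_div_iff₀ hM0' hN0]; exact key2
  have hGQ : (bad.card : ℚ) + good.card = M := by exact_mod_cast hGB
  have hgm : (good.card : ℚ) / M = 1 - bad.card / M := by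
    field_simp
    linarith
  calc (1 : ℚ) - d / N ≤ 1 - (bad.card : ℚ) / M := by linarith [main]
  _ = (good.card : ℚ) / M := hgm.symm
end

section
/- Let B_in and B_out be directed graphs on a common vertex set V with distinguished vertex r ∈ V. The number of pairs of consistent cuts ((V_in⁰, V_in¹), (V_out⁰, V_out¹)) of B_in and B_out respectively, with r ∈ V_in⁰ and r ∈ V_out⁰, equals 2^((cc(B_in)−1)+(cc(B_out)−1)). In particular, this number is odd if and only if both B_in and B_out are weakly connected. -/
/-!
A finset `S` satisfies the cut condition for `B` exactly when it is a union of weak components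
of `B`, i.e. the preimage of a set of classes of the weak-reachability setoid. Those containing
`r` are therefore counted by the subsets of the `cc B - 1` components other than that of `r`,
and the two cuts of a pair are chosen independently.
-/

attribute [local instance] Classical.propDecidable

variable {V : Type*} [Fintype V] [DecidableEq V]

/-- Weak reachability in the digraph with arc set `B`. -/
def wreach (B : Finset (V × V)) (u v : V) : Prop :=
  Relation.ReflTransGen (fun a b => (a, b) ∈ B ∨ (b, a) ∈ B) u v

/-- The number of weakly connected components of the digraph `(V, B)`. -/
noncomputable def cc (B : Finset (V × V)) : ℕ :=
  (Finset.univ.image fun v : V => Finset.univ.filter fun u => wreach B v u).card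

open Finset

theorem card_filter_mem_eq_two_pow {α : Type*} [Fintype α] (a : α) :
    #(univ.filter fun T : Finset α => a ∈ T) = 2 ^ (Fintype.card α - 1) := by
  have himage :
      univ.filter (fun T : Finset α => a ∈ T) = (univ.erase a).powerset.image (insert a) := by
    ext T
    simp only [mem_filter, mem_univ, true_and, mem_image, mem_powerset]
    refine ⟨fun h => ⟨T.erase a, erase_subset_erase _ (subset_univ _), insert_erase h⟩, ?_⟩
    rintro ⟨U, -, rfl⟩
    exact mem_insert_self a U
  rw [himage, card_image_of_injOn, card_powerset, card_erase_of_mem (mem_univ a), card_univ]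
  intro U hU U' hU' h
  simp only [coe_powerset, Set.mem_preimage, Set.mem_powerset_iff, coe_subset, subset_erase]
    at hU hU'
  rw [← erase_insert hU.2, h, erase_insert hU'.2]

theorem card_filter_saturated {α : Type*} [Fintype α] (s : Setoid α) (a : α) :
    #(univ.filter fun S : Finset α => a ∈ S ∧ ∀ u v, s u v → (u ∈ S ↔ v ∈ S)) =
      2 ^ (Fintype.card (Quotient s) - 1) := by
  set preim : Finset (Quotient s) → Finset α :=
    fun T => univ.filter fun v => Quotient.mk s v ∈ T
  have hinj : Function.Injective preim := by
    intro T T' h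
    ext q
    obtain ⟨v, rfl⟩ := Quotient.mk_surjective q
    simpa [preim] using congrArg (v ∈ ·) h
  have himage : univ.filter (fun S : Finset α => a ∈ S ∧ ∀ u v, s u v → (u ∈ S ↔ v ∈ S)) =
      (univ.filter fun T => Quotient.mk s a ∈ T).image preim := by
    ext S
    simp only [mem_filter, mem_univ, true_and, mem_image, preim]
    constructor
    · rintro ⟨ha, hsat⟩
      refine ⟨S.image (Quotient.mk s), mem_image_of_mem _ ha, ?_⟩
      ext v
      simp only [mem_filter, mem_univ, true_and, mem_image, Quotient.eq]
      exact ⟨fun ⟨w, hw, hwv⟩ => (hsat w v hwv).1 hw, fun hv => ⟨v, hv, s.refl v⟩⟩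
    · rintro ⟨T, ha, rfl⟩
      simp only [mem_filter, mem_univ, true_and]
      exact ⟨ha, fun u v huv => by rw [Quotient.sound huv]⟩
  rw [himage, card_image_of_injective _ hinj]
  convert card_filter_mem_eq_two_pow (Quotient.mk s a)

theorem card_image_filter_rel_eq_card_quotient {α : Type*} [Fintype α] [DecidableEq α]
    (s : Setoid α) :
    #(univ.image fun v => univ.filter fun u => s v u) = Fintype.card (Quotient s) := by
  set cls : Quotient s → Finset α := Quotient.lift (fun v => univ.filter fun u => s v u)
    fun v w hvw => by
      ext u
      simp only [mem_filter, mem_univ, true_and]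
      exact ⟨s.trans (s.symm hvw), s.trans hvw⟩
  have hinj : Function.Injective cls := by
    intro p q h
    obtain ⟨v, rfl⟩ := Quotient.mk_surjective p
    obtain ⟨w, rfl⟩ := Quotient.mk_surjective q
    have : w ∈ cls (Quotient.mk s w) := by simp [cls]
    rw [← h] at this
    simpa [cls, Quotient.eq] using this
  have : (fun v => univ.filter fun u => s v u) = cls ∘ Quotient.mk s := rfl
  rw [this, ← image_image, image_univ_of_surjective Quotient.mk_surjective,
    card_image_of_injective _ hinj, card_univ]

theorem wreach_equivalence {α : Type*} (B : Finset (α × α)) : Equivalence (wreach B) where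
  refl _ := .refl
  symm h := by
    induction h with
    | refl => exact .refl
    | tail _ hab ih => exact .head hab.symm ih
  trans := .trans

def wreachSetoid {α : Type*} (B : Finset (α × α)) : Setoid α :=
  ⟨wreach B, wreach_equivalence B⟩

theorem forall_mem_iff_iff_forall_wreach {α : Type*} {B : Finset (α × α)} {S : Finset α} :
    (∀ e ∈ B, (e.1 ∈ S ↔ e.2 ∈ S)) ↔ ∀ u v, wreach B u v → (u ∈ S ↔ v ∈ S) := by
  refine ⟨fun h u v huv => ?_, fun h e he => h e.1 e.2 (.single (.inl he))⟩
  induction huv with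
  | refl => rfl
  | tail _ hab ih => exact ih.trans (hab.elim (h _ ·) fun hba => (h _ hba).symm)

theorem cc_eq_card_quotient (B : Finset (V × V)) :
    cc B = Fintype.card (Quotient (wreachSetoid B)) :=
  card_image_filter_rel_eq_card_quotient (wreachSetoid B)

theorem cc_le_one_iff (B : Finset (V × V)) : cc B ≤ 1 ↔ ∀ u v, wreach B u v := by
  rw [cc_eq_card_quotient, Fintype.card_le_one_iff]
  simp only [Quotient.forall, Quotient.eq]
  rfl

theorem card_cuts_containing (B : Finset (V × V)) (r : V) :
    #(univ.filter fun S : Finset V => r ∈ S ∧ ∀ e ∈ B, (e.1 ∈ S ↔ e.2 ∈ S)) = 2 ^ (cc B - 1) := by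
  simp_rw [forall_mem_iff_iff_forall_wreach]
  rw [cc_eq_card_quotient]
  convert card_filter_saturated (wreachSetoid B) r using 3
  exact Iff.rfl

theorem card_cut_pairs (Bin Bout : Finset (V × V)) (r : V) :
    #(univ.filter fun p : Finset V × Finset V =>
        (r ∈ p.1 ∧ ∀ e ∈ Bin, (e.1 ∈ p.1 ↔ e.2 ∈ p.1)) ∧
        (r ∈ p.2 ∧ ∀ e ∈ Bout, (e.1 ∈ p.2 ↔ e.2 ∈ p.2))) =
      2 ^ ((cc Bin - 1) + (cc Bout - 1)) := by
  rw [pow_add, ← card_cuts_containing, ← card_cuts_containing, ← card_product,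
    ← filter_product, univ_product_univ]

theorem stmt_3_general (Bin Bout : Finset (V × V)) (r : V) :
    (Finset.univ.filter fun p : Finset V × Finset V =>
        (r ∈ p.1 ∧ ∀ e ∈ Bin, (e.1 ∈ p.1 ↔ e.2 ∈ p.1)) ∧
        (r ∈ p.2 ∧ ∀ e ∈ Bout, (e.1 ∈ p.2 ↔ e.2 ∈ p.2))).card
      = 2 ^ ((cc Bin - 1) + (cc Bout - 1)) ∧
    (Odd (Finset.univ.filter fun p : Finset V × Finset V =>
        (r ∈ p.1 ∧ ∀ e ∈ Bin, (e.1 ∈ p.1 ↔ e.2 ∈ p.1)) ∧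
        (r ∈ p.2 ∧ ∀ e ∈ Bout, (e.1 ∈ p.2 ↔ e.2 ∈ p.2))).card ↔
      (∀ a b : V, wreach Bin a b) ∧ (∀ a b : V, wreach Bout a b)) := by
  refine ⟨card_cut_pairs Bin Bout r, ?_⟩
  rw [card_cut_pairs, ← Nat.not_even_iff_odd, Nat.even_pow, ← cc_le_one_iff, ← cc_le_one_iff]
  simp only [even_two, true_and, not_not]
  omega

/-- The number of pairs of consistent cuts of `Bin` and `Bout` with `r` on the `0`-side of
both is `2 ^ ((cc(Bin) − 1) + (cc(Bout) − 1))`; in particular this number is odd iff both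
`Bin` and `Bout` are weakly connected. -/
theorem stmt_3 [Nonempty V] (Bin Bout : Finset (V × V)) (r : V) :
    (Finset.univ.filter fun p : Finset V × Finset V =>
        (r ∈ p.1 ∧ ∀ e ∈ Bin, (e.1 ∈ p.1 ↔ e.2 ∈ p.1)) ∧
        (r ∈ p.2 ∧ ∀ e ∈ Bout, (e.1 ∈ p.2 ↔ e.2 ∈ p.2))).card
      = 2 ^ ((cc Bin - 1) + (cc Bout - 1)) ∧
    (Odd (Finset.univ.filter fun p : Finset V × Finset V =>
        (r ∈ p.1 ∧ ∀ e ∈ Bin, (e.1 ∈ p.1 ↔ e.2 ∈ p.1)) ∧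
        (r ∈ p.2 ∧ ∀ e ∈ Bout, (e.1 ∈ p.2 ↔ e.2 ∈ p.2))).card ↔
      (∀ a b : V, wreach Bin a b) ∧ (∀ a b : V, wreach Bout a b)) :=
  stmt_3_general Bin Bout r
end

section
/- A finite directed graph D with at least two vertices is strongly connected if and only if it admits an ear decomposition, i.e., a sequence P₁,...,P_r of subdigraphs covering all vertices and arcs of D, where P₁ is a directed cycle and each P_i (i ≥ 2) is a directed ear with respect to the union H_{i−1} = P₁ ∪ ⋯ ∪ P_{i−1}: either a directed path whose endpoints lie in H_{i−1} and whose internal vertices are outside H_{i−1}, or a directed cycle intersecting H_{i−1} in exactly one vertex. -/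
variable {V : Type*} [Fintype V] [DecidableEq V]

/-- The vertex list of an ear from `a` to `b` with internal vertices `mid`. -/
def earList (a : V) (mid : List V) (b : V) : List V := a :: (mid ++ [b])

/-- The arcs traversed by a list of vertices. -/
def arcsOf (l : List V) : List (V × V) := l.zip l.tail

/-- `EarDecomp D q S A` : the subdigraph with vertex set `S` and arc set `A` admits an ear
decomposition with exactly `q` ears, all arcs taken from `D`. The first ear is a directed
cycle; each further ear is a directed path whose endpoints lie in the current vertex set and
whose internal vertices are new and distinct (a directed cycle meeting the current graph in
exactly one vertex being the case `a = b`). -/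
inductive EarDecomp (D : Finset (V × V)) : ℕ → Finset V → Finset (V × V) → Prop
  | cycle (a : V) (mid : List V) :
      (a :: mid).Nodup →
      (∀ e ∈ arcsOf (earList a mid a), e ∈ D) →
      EarDecomp D 1 (earList a mid a).toFinset (arcsOf (earList a mid a)).toFinset
  | ear (q : ℕ) (S : Finset V) (A : Finset (V × V)) (a b : V) (mid : List V) :
      EarDecomp D q S A → a ∈ S → b ∈ S → mid.Nodup → (∀ v ∈ mid, v ∉ S) →
      (∀ e ∈ arcsOf (earList a mid b), e ∈ D) →
      EarDecomp D (q + 1) (S ∪ (earList a mid b).toFinset)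
        (A ∪ (arcsOf (earList a mid b)).toFinset)

/-! Each vertex of a new ear reaches the ear's end and is reached from its start, and both lie in
the part built so far, so strong connectivity propagates along an ear decomposition. Conversely,
in a strongly connected digraph an arc out of a vertex `u` followed by a walk back to `u` gives
the first cycle; while some vertex is uncovered, an arc leaving the covered set followed by a walk
back into it gives, after erasing loops, an ear with new vertices; once every vertex is covered,
each remaining arc is an ear by itself. -/

open Finset Relation

section Chains

variable {α : Type*} {r : α → α → Prop}

theorem List.IsChain.reflTransGen_head_of_mem {a v : α} {l : List α} (h : (a :: l).IsChain r)
    (hv : v ∈ a :: l) : ReflTransGen r a v :=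
  h.induction (ReflTransGen r a) _ (fun _ _ hxy hax => hax.tail hxy) (fun _ => .refl) v hv

theorem List.IsChain.reflTransGen_of_mem_concat {b v : α} {l : List α} (h : (l ++ [b]).IsChain r)
    (hv : v ∈ l ++ [b]) : ReflTransGen r v b :=
  h.backwards_induction (ReflTransGen r · b) _ (fun _ _ hxy hyb => hyb.head hxy)
    (fun _ => List.getLast_concat ▸ .refl) v hv

theorem Relation.ReflTransGen.exists_rel_leaving {p : α → Prop} {a v : α}
    (h : ReflTransGen r a v) (ha : p a) (hv : ¬p v) : ∃ x y, p x ∧ ¬p y ∧ r x y := by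
  induction h with
  | refl => exact absurd ha hv
  | @tail b c _ hbc ih =>
    by_cases hb : p b
    · exact ⟨b, c, hb, hv, hbc⟩
    · exact ih hb

/-- Loop erasure: the walk is cut at its first vertex satisfying `p`, and each time it revisits
a vertex the loop in between is dropped. -/
theorem Relation.ReflTransGen.exists_nodup_isChain {p : α → Prop} {y a : α}
    (h : ReflTransGen r y a) (ha : p a) (hy : ¬p y) :
    ∃ mid z, p z ∧ (y :: mid).Nodup ∧ (∀ v ∈ y :: mid, ¬p v) ∧
      (y :: (mid ++ [z])).IsChain r := by
  induction h using Relation.ReflTransGen.head_induction_on with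
  | refl => exact absurd ha hy
  | @head x c hxc _ ih =>
    by_cases hc : p c
    · exact ⟨[], c, hc, List.nodup_singleton x, by simpa using hy,
        .cons_cons hxc (.singleton c)⟩
    obtain ⟨mid, z, hz, hnd, hout, hchain⟩ := ih hc
    by_cases hx : x ∈ c :: mid
    · obtain ⟨l₁, l₂, hsplit⟩ := List.append_of_mem hx
      have hsuffix : (x :: l₂).Sublist (c :: mid) := hsplit ▸ List.sublist_append_right l₁ _
      refine ⟨l₂, z, hz, hsuffix.nodup hnd, fun v hv => hout v (hsuffix.mem hv), ?_⟩
      have hwalk : c :: (mid ++ [z]) = l₁ ++ x :: (l₂ ++ [z]) := by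
        rw [← List.cons_append, hsplit, List.append_assoc, List.cons_append]
      exact (hwalk ▸ hchain).right_of_append
    · refine ⟨c :: mid, z, hz, List.nodup_cons.2 ⟨hx, hnd⟩, ?_, .cons_cons hxc hchain⟩
      rintro v (_ | ⟨_, hv⟩)
      exacts [hy, hout v hv]

theorem forall_mem_arcsOf_iff_isChain {l : List α} :
    (∀ e ∈ arcsOf l, r e.1 e.2) ↔ l.IsChain r := by
  induction l using List.twoStepInduction with
  | nil => simp [arcsOf]
  | singleton => simp [arcsOf]
  | cons_cons a b t _ ih =>
    have harcs : arcsOf (a :: b :: t) = (a, b) :: arcsOf (b :: t) := rfl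
    rw [List.isChain_cons_cons, ← ih, harcs]
    simp

theorem isChain_mem_arcsOf (l : List α) : l.IsChain fun x y => (x, y) ∈ arcsOf l :=
  forall_mem_arcsOf_iff_isChain.1 fun _ he => he

end Chains

namespace EarDecomp

variable {α : Type*} [DecidableEq α] {D : Finset (α × α)} {q : ℕ} {S : Finset α}
  {A : Finset (α × α)}

theorem nonempty (h : EarDecomp D q S A) : S.Nonempty := by
  induction h with
  | cycle a => exact ⟨a, by simp [earList]⟩
  | ear _ _ _ _ _ _ _ _ _ _ _ _ ih => exact ih.mono subset_union_left

theorem arcs_subset (h : EarDecomp D q S A) : A ⊆ D := by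
  induction h with
  | cycle _ _ _ harcs => exact fun e he => harcs e (List.mem_toFinset.1 he)
  | ear _ _ _ _ _ _ _ _ _ _ _ harcs ih =>
    exact union_subset ih fun e he => harcs e (List.mem_toFinset.1 he)

theorem reflTransGen (h : EarDecomp D q S A) :
    ∀ u ∈ S, ∀ v ∈ S, ReflTransGen (fun x y => (x, y) ∈ A) u v := by
  induction h with
  | cycle a mid =>
    intro u hu v hv
    have hchain := (isChain_mem_arcsOf (earList a mid a)).imp fun x y hxy =>
      List.mem_toFinset.2 hxy
    rw [List.mem_toFinset] at hu hv
    exact (List.IsChain.reflTransGen_of_mem_concat (l := a :: mid) hchain hu).trans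
      (hchain.reflTransGen_head_of_mem hv)
  | ear q S A a b mid _ ha hb _ _ _ ih =>
    intro u hu v hv
    set R : α → α → Prop := fun x y => (x, y) ∈ A ∪ (arcsOf (earList a mid b)).toFinset
    have hchain : (earList a mid b).IsChain R := (isChain_mem_arcsOf _).imp fun x y hxy =>
      mem_union_right A (List.mem_toFinset.2 hxy)
    have hold : ∀ {x y}, x ∈ S → y ∈ S → ReflTransGen R x y :=
      fun hx hy => ReflTransGen.mono (fun _ _ => mem_union_left _) _ _ (ih _ hx _ hy)
    -- every vertex reaches the end `b` of the new ear, which reaches its start `a`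
    have hub : ReflTransGen R u b := by
      rcases mem_union.1 hu with hu | hu
      · exact hold hu hb
      · exact List.IsChain.reflTransGen_of_mem_concat (l := a :: mid) hchain
          (List.mem_toFinset.1 hu)
    have hav : ReflTransGen R a v := by
      rcases mem_union.1 hv with hv | hv
      · exact hold ha hv
      · exact hchain.reflTransGen_head_of_mem (List.mem_toFinset.1 hv)
    exact hub.trans ((hold hb ha).trans hav)

end EarDecomp

theorem exists_ear_through_arc {α : Type*} {D : Finset (α × α)} {S : Finset α} {x w a : α}
    (hxw : (x, w) ∈ D) (hw : w ∉ S)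
    (hwa : ReflTransGen (fun a b => (a, b) ∈ D) w a) (ha : a ∈ S) :
    ∃ mid z, z ∈ S ∧ (w :: mid).Nodup ∧ (∀ v ∈ w :: mid, v ∉ S) ∧
      ∀ e ∈ arcsOf (earList x (w :: mid) z), e ∈ D := by
  obtain ⟨mid, z, hz, hnd, hout, hchain⟩ := hwa.exists_nodup_isChain (p := (· ∈ S)) ha hw
  exact ⟨mid, z, hz, hnd, hout, forall_mem_arcsOf_iff_isChain.2 (.cons_cons hxw hchain)⟩

section StronglyConnected

variable {D : Finset (V × V)} (hsc : ∀ u v : V, ReflTransGen (fun a b => (a, b) ∈ D) u v)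
include hsc

theorem exists_earDecomp_cycle (h2 : 2 ≤ Fintype.card V) : ∃ S A, EarDecomp D 1 S A := by
  obtain ⟨u, v, huv⟩ := Fintype.exists_pair_of_one_lt_card h2
  obtain ⟨c, huc, hcv⟩ : ∃ c, (u, c) ∈ D ∧ ReflTransGen (fun a b => (a, b) ∈ D) c v :=
    ((hsc u v).cases_head).resolve_left huv
  by_cases hcu : c = u
  · subst hcu
    exact ⟨_, _, .cycle c [] (List.nodup_singleton c) (by simpa [earList, arcsOf] using huc)⟩
  obtain ⟨mid, z, hz, hnd, hout, harcs⟩ := exists_ear_through_arc huc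
    (by simpa using hcu) (hcv.trans (hsc v u)) (mem_singleton_self u)
  obtain rfl := mem_singleton.1 hz
  have hnd' : (z :: c :: mid).Nodup :=
    List.nodup_cons.2 ⟨fun hz => hout z hz (mem_singleton_self z), hnd⟩
  exact ⟨_, _, .cycle z (c :: mid) hnd' harcs⟩

theorem EarDecomp.exists_univ {q : ℕ} {S : Finset V} {A : Finset (V × V)}
    (h : EarDecomp D q S A) : ∃ q' A', EarDecomp D q' univ A' := by
  by_cases hS : S = univ
  · exact ⟨q, A, hS ▸ h⟩
  obtain ⟨v, -, hv⟩ := exists_of_ssubset (ssubset_univ_iff.2 hS)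
  obtain ⟨a, ha⟩ := h.nonempty
  obtain ⟨x, w, hx, hw, hxw⟩ := (hsc a v).exists_rel_leaving (p := (· ∈ S)) ha hv
  obtain ⟨mid, z, hz, hnd, hout, harcs⟩ := exists_ear_through_arc hxw hw (hsc w a) ha
  exact (h.ear q S A x z (w :: mid) hx hz hnd hout harcs).exists_univ
termination_by (univ \ S).card
decreasing_by
  refine card_lt_card (ssubset_iff_of_subset (sdiff_subset_sdiff le_rfl subset_union_left) |>.2
    ⟨w, mem_sdiff.2 ⟨mem_univ w, hw⟩, fun hw' => (mem_sdiff.1 hw').2 ?_⟩)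
  simp [earList]

end StronglyConnected

theorem EarDecomp.exists_union {D : Finset (V × V)} {q : ℕ} {A T : Finset (V × V)}
    (h : EarDecomp D q univ A) (hT : T ⊆ D) : ∃ q', EarDecomp D q' univ (A ∪ T) := by
  induction T using Finset.induction_on with
  | empty => exact ⟨q, by simpa using h⟩
  | @insert e T _ ih =>
    obtain ⟨q', h'⟩ := ih ((subset_insert e T).trans hT)
    have harc : ∀ e' ∈ arcsOf (earList e.1 [] e.2), e' ∈ D := by
      simpa [earList, arcsOf] using hT (mem_insert_self e T)
    refine ⟨q' + 1, ?_⟩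
    convert h'.ear q' univ (A ∪ T) e.1 e.2 [] (mem_univ _) (mem_univ _) List.nodup_nil
      (by simp) harc using 1 <;> simp [earList, arcsOf, union_comm, union_left_comm]

/-- A finite digraph with at least two vertices is strongly connected iff it admits an ear
decomposition covering all its vertices and arcs. -/
theorem stmt_4 (D : Finset (V × V)) (h2 : 2 ≤ Fintype.card V) :
    (∀ u v : V, Relation.ReflTransGen (fun a b => (a, b) ∈ D) u v) ↔
      ∃ q : ℕ, EarDecomp D q Finset.univ D := by
  refine ⟨fun hsc => ?_, fun ⟨q, h⟩ u v => h.reflTransGen u (mem_univ u) v (mem_univ v)⟩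
  obtain ⟨S, A, hcycle⟩ := exists_earDecomp_cycle hsc h2
  obtain ⟨q, A', hspanning⟩ := hcycle.exists_univ hsc
  obtain ⟨q', hD⟩ := hspanning.exists_union (subset_refl D)
  exact ⟨q', by rwa [union_eq_right.2 hspanning.arcs_subset] at hD⟩
end

section
/- Let G be a 2-edge-connected undirected graph, and let H be a strongly connected orientation-subgraph (i.e., a strongly connected subdigraph of the bidirected version of G that spans V(G)) whose underlying undirected multigraph has a bridge e = {u,v}. Then H must contain both arcs (u,v) and (v,u), and since G is 2-edge-connected there exists another edge of G crossing the cut determined by e; replacing one of the two orientations of e by a suitable orientation of that edge preserves strong connectivity, keeps the number of arcs unchanged, and strictly decreases the number of bridges of the underlying graph. -/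
/-! Let `S` be the side of `u` once the bridge `uv` is deleted from the underlying graph of `H`.
The only arc of `H` leaving `S` is `(u, v)` and the only one entering it is `(v, u)`, so strong
connectivity forces both. A path of `G - uv` from `u` to `v` leaves `S` along an edge `ab` with
`a ∈ S`, `b ∉ S`, which is not an edge of `H`. Inside `S`, `u` reaches `a`, and outside `S`, `b`
reaches `v`, so `(a, b)` can take over the role of `(u, v)`. In the new digraph `uv` and `ab` both
lie on the cycle `a ⋯ u v ⋯ b a`, and every other bridge of it was already a bridge of `H`. -/

attribute [local instance] Classical.propDecidable

variable {V : Type*} [Fintype V] [DecidableEq V]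

/-- Reachability in the underlying undirected graph of the arc set `H`. -/
def uReach (H : Finset (V × V)) (a b : V) : Prop :=
  Relation.ReflTransGen (fun x y => (x, y) ∈ H ∨ (y, x) ∈ H) a b

/-- `{u,v}` is a bridge of the underlying undirected graph of the arc set `H`. -/
def IsBridge (H : Finset (V × V)) (u v : V) : Prop :=
  ((u, v) ∈ H ∨ (v, u) ∈ H) ∧ ¬ uReach ((H.erase (u, v)).erase (v, u)) u v

/-- The number of bridges of the underlying undirected graph of `H`. -/
noncomputable def numBridges (H : Finset (V × V)) : ℕ :=
  (((Finset.univ : Finset (V × V)).filter fun p => IsBridge H p.1 p.2).image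
    fun p => Sym2.mk p).card

namespace Relation.ReflTransGen

variable {α : Type*} {r : α → α → Prop} {P : α → Prop} {x y : α}

theorem exists_step_out (h : ReflTransGen r x y) (hx : P x) (hy : ¬ P y) :
    ∃ c d, r c d ∧ P c ∧ ¬ P d := by
  induction h with
  | refl => exact absurd hx hy
  | @tail c d _ hcd ih =>
    by_cases hc : P c
    · exact ⟨c, d, hcd, hc, hy⟩
    · exact ih hc

theorem within_to_unique_exit {c : α} (hexit : ∀ p q, r p q → P p → ¬ P q → p = c)
    (h : ReflTransGen r x y) (hx : P x) (hy : ¬ P y) :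
    ReflTransGen (fun p q => r p q ∧ P p ∧ P q) x c := by
  induction h using head_induction_on with
  | refl => exact absurd hx hy
  | @head x z hxz _ ih =>
    by_cases hz : P z
    · exact head ⟨hxz, hx, hz⟩ (ih hz)
    · exact hexit x z hxz hx hz ▸ refl

theorem within_from_unique_entry {d : α} (hentry : ∀ p q, r p q → ¬ P p → P q → q = d)
    (h : ReflTransGen r x y) (hx : ¬ P x) (hy : P y) :
    ReflTransGen (fun p q => r p q ∧ P p ∧ P q) d y := by
  induction h with
  | refl => exact absurd hy hx
  | @tail c z _ hcz ih =>
    by_cases hc : P c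
    · exact (ih hc).tail ⟨hcz, hc, hy⟩
    · exact hentry c z hcz hc hy ▸ refl

end Relation.ReflTransGen

section ArcSets

variable {α : Type*} {K K' : Finset (α × α)} {u v x y : α}

abbrev eraseEdge [DecidableEq α] (H : Finset (α × α)) (u v : α) : Finset (α × α) :=
  (H.erase (u, v)).erase (v, u)

theorem uReach_symm (h : uReach K x y) : uReach K y x := by
  induction h with
  | refl => exact .refl
  | tail _ hs ih => exact ih.head hs.symm

theorem uReach_mono (hK : K ⊆ K') (h : uReach K x y) : uReach K' x y :=
  Relation.ReflTransGen.mono (fun _ _ => Or.imp (@hK _) (@hK _)) _ _ h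

theorem uReach_of_reflTransGen (h : Relation.ReflTransGen (fun p q => (p, q) ∈ K) x y) :
    uReach K x y :=
  Relation.ReflTransGen.mono (fun _ _ => Or.inl) _ _ h

theorem uReach_erase_of_mem_swap [DecidableEq α] (hvu : (v, u) ∈ K) (h : uReach K x y) :
    uReach (K.erase (u, v)) x y := by
  refine Relation.reflTransGen_closed (fun p q hpq => ?_) _ _ h
  by_cases hpq' : p = q
  · exact hpq' ▸ .refl
  refine .single ?_
  simp only [Finset.mem_erase, ne_eq, Prod.mk.injEq]
  grind

theorem reflTransGen_eraseEdge_of_within [DecidableEq α] {P : α → Prop} (huv : ¬ P u ∨ ¬ P v)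
    (h : Relation.ReflTransGen (fun p q => (p, q) ∈ K ∧ P p ∧ P q) x y) :
    Relation.ReflTransGen (fun p q => (p, q) ∈ eraseEdge K u v) x y :=
  Relation.ReflTransGen.mono (fun p q ⟨hpq, hp, hq⟩ => by
    simp only [Finset.mem_erase, ne_eq, Prod.mk.injEq]
    grind) _ _ h

end ArcSets

theorem Finset.card_insert_erase {β : Type*} [DecidableEq β] {s : Finset β} {x y : β}
    (hx : x ∈ s) (hy : y ∉ s) : (insert y (s.erase x)).card = s.card := by
  rw [Finset.card_insert_of_notMem (fun h => hy (Finset.mem_of_mem_erase h)),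
    Finset.card_erase_add_one hx]

theorem pair_ne_of_sym2_ne {β : Type*} {x y a b : β} (h : s(x, y) ≠ s(a, b)) :
    (x, y) ≠ (a, b) ∧ (y, x) ≠ (a, b) := by
  constructor <;> rintro ⟨⟩ <;> simp_all [Sym2.eq_swap]

section Bridges

variable {α : Type*} [DecidableEq α] {H K : Finset (α × α)} {u v x y p q : α}

theorem IsBridge.ne (h : IsBridge H u v) : u ≠ v := by
  rintro rfl
  exact h.2 .refl

theorem isBridge_comm : IsBridge H u v ↔ IsBridge H v u := by
  unfold IsBridge
  rw [Finset.erase_right_comm, or_comm]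
  exact and_congr_right fun _ => not_congr ⟨uReach_symm, uReach_symm⟩

theorem IsBridge.of_sym2_eq (he : s(u, v) = s(x, y)) (h : IsBridge H u v) : IsBridge H x y := by
  rcases Sym2.eq_iff.mp he with ⟨rfl, rfl⟩ | ⟨rfl, rfl⟩
  exacts [h, isBridge_comm.mp h]

theorem isBridge_of_isBridge_insert {a b : α} (hne : s(x, y) ≠ s(a, b))
    (h : IsBridge (insert (a, b) K) x y) : IsBridge K x y := by
  refine ⟨?_, fun hr => h.2 (uReach_mono ?_ hr)⟩
  · obtain ⟨hxy, hyx⟩ := pair_ne_of_sym2_ne hne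
    simpa [hxy, hyx] using h.1
  · exact Finset.erase_subset_erase _ (Finset.erase_subset_erase _ (Finset.subset_insert _ _))

theorem isBridge_of_isBridge_erase (hvu : (v, u) ∈ H) (hne : s(x, y) ≠ s(u, v))
    (h : IsBridge (H.erase (u, v)) x y) : IsBridge H x y := by
  refine ⟨h.1.imp Finset.mem_of_mem_erase Finset.mem_of_mem_erase, fun hr => h.2 ?_⟩
  have hvu' : (v, u) ∈ eraseEdge H x y := by
    refine Finset.mem_erase.mpr ⟨?_, Finset.mem_erase.mpr ⟨?_, hvu⟩⟩ <;>
      rintro ⟨⟩ <;> simp_all [Sym2.eq_swap]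
  refine uReach_mono (fun p hp => ?_) (uReach_erase_of_mem_swap hvu' hr)
  simp only [Finset.mem_erase] at hp ⊢
  tauto

theorem eq_of_mem_of_uReach_of_not_uReach (hpq : (p, q) ∈ H) (hp : uReach (eraseEdge H u v) u p)
    (hq : ¬ uReach (eraseEdge H u v) u q) : (p, q) = (u, v) := by
  by_contra hne
  have hvu : (p, q) ≠ (v, u) := by
    rintro ⟨⟩
    exact hq .refl
  exact hq (hp.tail (Or.inl (by simp [hpq, hne, hvu])))

theorem eq_of_mem_of_not_uReach_of_uReach (hpq : (p, q) ∈ H)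
    (hp : ¬ uReach (eraseEdge H u v) u p) (hq : uReach (eraseEdge H u v) u q) :
    (p, q) = (v, u) := by
  by_contra hne
  have huv : (p, q) ≠ (u, v) := by
    rintro ⟨⟩
    exact hp .refl
  exact hp (hq.tail (Or.inr (by simp [hpq, hne, huv])))

end Bridges

section StronglyConnected

variable {α : Type*} [DecidableEq α] {H : Finset (α × α)} {u v a b : α}

theorem reflTransGen_insert_erase
    (hsc : ∀ x y, Relation.ReflTransGen (fun p q => (p, q) ∈ H) x y)
    (hua : Relation.ReflTransGen (fun p q => (p, q) ∈ H.erase (u, v)) u a)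
    (hbv : Relation.ReflTransGen (fun p q => (p, q) ∈ H.erase (u, v)) b v) (x y : α) :
    Relation.ReflTransGen (fun p q => (p, q) ∈ insert (a, b) (H.erase (u, v))) x y := by
  have hlift := Relation.ReflTransGen.mono (r := fun p q => (p, q) ∈ H.erase (u, v))
    (p := fun p q => (p, q) ∈ insert (a, b) (H.erase (u, v))) fun _ _ => Finset.mem_insert_of_mem
  refine Relation.reflTransGen_closed (fun p q hpq => ?_) _ _ (hsc x y)
  by_cases h : (p, q) = (u, v)
  · obtain ⟨rfl, rfl⟩ := Prod.mk.inj h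
    exact ((hlift _ _ hua).tail (Finset.mem_insert_self _ _)).trans (hlift _ _ hbv)
  · exact .single (Finset.mem_insert_of_mem (Finset.mem_erase.mpr ⟨h, hpq⟩))

theorem IsBridge.mem_of_reflTransGen
    (hsc : ∀ x y, Relation.ReflTransGen (fun p q => (p, q) ∈ H) x y) (hb : IsBridge H u v) :
    (u, v) ∈ H ∧ (v, u) ∈ H := by
  obtain ⟨c, d, hcd, hc, hd⟩ :=
    (hsc u v).exists_step_out (P := uReach (eraseEdge H u v) u) .refl hb.2
  obtain ⟨c', d', hcd', hc', hd'⟩ :=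
    (hsc v u).exists_step_out (P := fun x => ¬ uReach (eraseEdge H u v) u x) hb.2
      (not_not_intro .refl)
  exact ⟨eq_of_mem_of_uReach_of_not_uReach hcd hc hd ▸ hcd,
    eq_of_mem_of_not_uReach_of_uReach hcd' hc' (not_not.mp hd') ▸ hcd'⟩

theorem reflTransGen_eraseEdge_of_uReach
    (hsc : ∀ x y, Relation.ReflTransGen (fun p q => (p, q) ∈ H) x y)
    (hnr : ¬ uReach (eraseEdge H u v) u v) (ha : uReach (eraseEdge H u v) u a) :
    Relation.ReflTransGen (fun p q => (p, q) ∈ eraseEdge H u v) u a :=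
  reflTransGen_eraseEdge_of_within (Or.inr hnr) <| (hsc v a).within_from_unique_entry
    (fun _ _ hpq hp hq => (Prod.ext_iff.mp (eq_of_mem_of_not_uReach_of_uReach hpq hp hq)).2)
    hnr ha

theorem reflTransGen_eraseEdge_of_not_uReach
    (hsc : ∀ x y, Relation.ReflTransGen (fun p q => (p, q) ∈ H) x y)
    (hb : ¬ uReach (eraseEdge H u v) u b) :
    Relation.ReflTransGen (fun p q => (p, q) ∈ eraseEdge H u v) b v :=
  reflTransGen_eraseEdge_of_within (P := fun x => ¬ uReach (eraseEdge H u v) u x)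
    (Or.inl (not_not_intro .refl)) <| (hsc b u).within_to_unique_exit
    (fun _ _ hpq hp hq =>
      (Prod.ext_iff.mp (eq_of_mem_of_not_uReach_of_uReach hpq hp (not_not.mp hq))).1)
    hb (not_not_intro .refl)

end StronglyConnected

theorem Sym2.mk_injective {β : Type*} : Function.Injective (Sym2.mk : β → β → Sym2 β) :=
  fun x y h => by simpa [Sym2.eq_iff] using congrFun h x

section NumBridges

variable {α : Type*} [Fintype α] [DecidableEq α] {H K : Finset (α × α)} {u v a b : α}

-- `Sym2.mk` is curried, so `numBridges` counts the functions `Sym2.mk p`, i.e. ordered pairs.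
theorem numBridges_eq_card (H : Finset (α × α)) :
    numBridges H = (Finset.univ.filter fun p : α × α => IsBridge H p.1 p.2).card :=
  Finset.card_image_of_injective _ Sym2.mk_injective

theorem numBridges_lt (hsub : ∀ x y, IsBridge K x y → IsBridge H x y) (hH : IsBridge H u v)
    (hK : ¬ IsBridge K u v) : numBridges K < numBridges H := by
  rw [numBridges_eq_card, numBridges_eq_card]
  refine Finset.card_lt_card ((Finset.ssubset_iff_of_subset ?_).mpr ⟨(u, v), ?_, ?_⟩)
  · exact Finset.monotone_filter_right _ fun p _ => hsub p.1 p.2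
  · simpa using hH
  · simpa using hK

theorem numBridges_insert_erase_lt (hb : IsBridge H u v) (huv : (u, v) ∈ H) (hvu : (v, u) ∈ H)
    (hab : (a, b) ∉ H) (hba : (b, a) ∉ H) (hau : uReach (eraseEdge H u v) a u)
    (hbv : uReach (eraseEdge H u v) b v) :
    numBridges (insert (a, b) (H.erase (u, v))) < numBridges H := by
  have hnuv : ¬ IsBridge (insert (a, b) (H.erase (u, v))) u v := fun h => h.2 <| by
    have hsub : insert (a, b) (eraseEdge H u v) ⊆
        eraseEdge (insert (a, b) (H.erase (u, v))) u v := by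
      intro p
      simp only [Finset.mem_insert, Finset.mem_erase]
      grind
    have hlift {x y : α} :=
      uReach_mono (Finset.subset_insert (a, b) (eraseEdge H u v)) (x := x) (y := y)
    exact uReach_mono hsub (((hlift (uReach_symm hau)).tail
      (Or.inl (Finset.mem_insert_self _ _))).trans (hlift hbv))
  have hnab : ¬ IsBridge (insert (a, b) (H.erase (u, v))) a b := fun h => h.2 <| by
    have hsub : H.erase (u, v) ⊆ eraseEdge (insert (a, b) (H.erase (u, v))) a b := by
      intro p
      simp only [Finset.mem_insert, Finset.mem_erase]
      grind
    have hvu' : (v, u) ∈ H.erase (u, v) :=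
      Finset.mem_erase.mpr ⟨fun he => hb.ne (Prod.ext_iff.mp he).1.symm, hvu⟩
    refine uReach_mono hsub ?_
    exact ((uReach_mono (Finset.erase_subset _ _) hau).tail (Or.inr hvu')).trans
      (uReach_symm (uReach_mono (Finset.erase_subset _ _) hbv))
  refine numBridges_lt (fun x y h => ?_) hb hnuv
  refine isBridge_of_isBridge_erase hvu (fun he => hnuv (h.of_sym2_eq he)) ?_
  exact isBridge_of_isBridge_insert (fun he => hnab (h.of_sym2_eq he)) h

end NumBridges

theorem stmt_9_general (E : Finset (Sym2 V))
    (h2ec : ∀ e ∈ E, ∀ a b : V, Relation.ReflTransGen (fun x y => s(x, y) ∈ E.erase e) a b)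
    (H : Finset (V × V)) (hHsub : ∀ p ∈ H, s(p.1, p.2) ∈ E)
    (hHsc : ∀ a b : V, Relation.ReflTransGen (fun x y => (x, y) ∈ H) a b)
    (u v : V) (hbridge : IsBridge H u v) :
    (u, v) ∈ H ∧ (v, u) ∈ H ∧
    ∃ a b : V, s(a, b) ∈ E ∧ s(a, b) ≠ s(u, v) ∧
      uReach ((H.erase (u, v)).erase (v, u)) a u ∧
      uReach ((H.erase (u, v)).erase (v, u)) b v ∧
      ∃ rem add : V × V, (rem = (u, v) ∨ rem = (v, u)) ∧ (add = (a, b) ∨ add = (b, a)) ∧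
        (∀ x y : V, Relation.ReflTransGen (fun p q => (p, q) ∈ insert add (H.erase rem)) x y) ∧
        (insert add (H.erase rem)).card = H.card ∧
        numBridges (insert add (H.erase rem)) < numBridges H := by
  obtain ⟨huvH, hvuH⟩ := hbridge.mem_of_reflTransGen hHsc
  obtain ⟨a, b, hab, ha, hb⟩ := (h2ec _ (hHsub _ huvH) u v).exists_step_out
    (P := uReach (eraseEdge H u v) u) .refl hbridge.2
  obtain ⟨habne, habE⟩ := Finset.mem_erase.mp hab
  have habH : (a, b) ∉ H := fun h => habne <| by
    obtain ⟨rfl, rfl⟩ := Prod.mk.inj (eq_of_mem_of_uReach_of_not_uReach h ha hb); rfl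
  have hbaH : (b, a) ∉ H := fun h => habne <| by
    obtain ⟨rfl, rfl⟩ := Prod.mk.inj (eq_of_mem_of_not_uReach_of_uReach h hb ha); rfl
  have hua := reflTransGen_eraseEdge_of_uReach hHsc hbridge.2 ha
  have hbv := reflTransGen_eraseEdge_of_not_uReach hHsc hb
  have hlift := Relation.ReflTransGen.mono (r := fun p q => (p, q) ∈ eraseEdge H u v)
    (p := fun p q => (p, q) ∈ H.erase (u, v)) fun _ _ => Finset.mem_of_mem_erase
  have hau := uReach_symm (uReach_of_reflTransGen hua)
  have hbv' := uReach_of_reflTransGen hbv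
  refine ⟨huvH, hvuH, a, b, habE, habne, hau, hbv', (u, v), (a, b), .inl rfl, .inl rfl,
    reflTransGen_insert_erase hHsc (hlift _ _ hua) (hlift _ _ hbv),
    Finset.card_insert_erase huvH habH,
    numBridges_insert_erase_lt hbridge huvH hvuH habH hbaH hau hbv'⟩

/-- If `G` is 2-edge-connected, `H` is a strongly connected spanning subdigraph of the
bidirected version of `G`, and `{u,v}` is a bridge of the underlying graph of `H`, then
`H` contains both arcs `(u,v)` and `(v,u)`, there is another edge of `G` crossing the cut
determined by the bridge, and replacing one orientation of the bridge by a suitable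
orientation of that edge preserves strong connectivity, keeps the number of arcs unchanged
and strictly decreases the number of bridges. -/
theorem stmt_9 (E : Finset (Sym2 V)) (h2 : 2 ≤ Fintype.card V)
    (h2ecConn : ∀ a b : V, Relation.ReflTransGen (fun x y => s(x, y) ∈ E) a b)
    (h2ec : ∀ e ∈ E, ∀ a b : V, Relation.ReflTransGen (fun x y => s(x, y) ∈ E.erase e) a b)
    (H : Finset (V × V)) (hHsub : ∀ p ∈ H, s(p.1, p.2) ∈ E)
    (hHsc : ∀ a b : V, Relation.ReflTransGen (fun x y => (x, y) ∈ H) a b)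
    (u v : V) (hbridge : IsBridge H u v) :
    (u, v) ∈ H ∧ (v, u) ∈ H ∧
    ∃ a b : V, s(a, b) ∈ E ∧ s(a, b) ≠ s(u, v) ∧
      uReach ((H.erase (u, v)).erase (v, u)) a u ∧
      uReach ((H.erase (u, v)).erase (v, u)) b v ∧
      ∃ rem add : V × V, (rem = (u, v) ∨ rem = (v, u)) ∧ (add = (a, b) ∨ add = (b, a)) ∧
        (∀ x y : V, Relation.ReflTransGen (fun p q => (p, q) ∈ insert add (H.erase rem)) x y) ∧
        (insert add (H.erase rem)).card = H.card ∧
        numBridges (insert add (H.erase rem)) < numBridges H :=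
  stmt_9_general E h2ec H hHsub hHsc u v hbridge
end
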